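/- arXiv:1708.01050 — 12 statements merged into one kernel-verified Lean document; each statement's English description precedes it below -/
import Mathlib

section
/- Two-dimensional strong orthogonality for the bijective-on-objects/fully-faithful factorisation on Cat. Let E : A ⥤ C be a bijective-on-objects functor and N : B ⥤ D a fully faithful functor. For i = 1, 2, let F_i : A ⥤ B and G_i : C ⥤ D be functors, φ_i : F_i ⋙ N ≅ E ⋙ G_i natural isomorphisms, and suppose (H_i, θ_i) is a fill-in for φ_i, i.e. H_i : C ⥤ B satisfies E ⋙ H_i = F_i and θ_i : H_i ⋙ N ≅ G_i is a natural isomorphism with (θ_i)_{E a} = (φ_i)_a for every object a of A. Let α : F₁ ⟶ F₂ and β : G₁ ⟶ G₂ be natural transformations such that (φ₂)_a ∘ N(α_a) = β_{E a} ∘ (φ₁)_a for every a. Then there is a unique natural transformation γ : H₁ ⟶ H₂ such that γ_{E a} = α_a for every object a of A and (θ₂)_c ∘ N(γ_c) = β_c ∘ (θ₁)_c for every object c of C. -/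
open CategoryTheory

universe v₁ u₁ v₂ u₂ v₃ u₃ v₄ u₄

/-- two-dimensional strong orthogonality for the bijective-on-objects /
fully-faithful factorisation on `Cat`.  Given a bijective-on-objects `E : A ⥤ C`, a fully
faithful `N : B ⥤ D`, natural isomorphisms `φᵢ : Fᵢ ⋙ N ≅ E ⋙ Gᵢ` with fill-ins
`(Hᵢ, θᵢ)`, and natural transformations `α : F₁ ⟶ F₂`, `β : G₁ ⟶ G₂` compatible with the
`φᵢ`, there is a unique `γ : H₁ ⟶ H₂` with `γ_{E a} = α_a` and
`θ₂ ∘ N γ = β ∘ θ₁` componentwise. -/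
theorem two_dimensional_strong_orthogonality
    {A : Type u₁} [Category.{v₁} A] {B : Type u₂} [Category.{v₂} B]
    {C : Type u₃} [Category.{v₃} C] {D : Type u₄} [Category.{v₄} D]
    (E : A ⥤ C) (hE : Function.Bijective E.obj)
    (N : B ⥤ D) [N.Full] [N.Faithful]
    (F₁ F₂ : A ⥤ B) (G₁ G₂ : C ⥤ D)
    (φ₁ : F₁ ⋙ N ≅ E ⋙ G₁) (φ₂ : F₂ ⋙ N ≅ E ⋙ G₂)
    (H₁ H₂ : C ⥤ B) (hH₁ : E ⋙ H₁ = F₁) (hH₂ : E ⋙ H₂ = F₂)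
    (θ₁ : H₁ ⋙ N ≅ G₁) (θ₂ : H₂ ⋙ N ≅ G₂)
    (hθ₁ : ∀ a : A, θ₁.hom.app (E.obj a) =
      eqToHom (congrArg N.obj (Functor.congr_obj hH₁ a)) ≫ φ₁.hom.app a)
    (hθ₂ : ∀ a : A, θ₂.hom.app (E.obj a) =
      eqToHom (congrArg N.obj (Functor.congr_obj hH₂ a)) ≫ φ₂.hom.app a)
    (α : F₁ ⟶ F₂) (β : G₁ ⟶ G₂)
    (hcompat : ∀ a : A, N.map (α.app a) ≫ φ₂.hom.app a = φ₁.hom.app a ≫ β.app (E.obj a)) :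
    ∃! γ : H₁ ⟶ H₂,
      (∀ a : A, γ.app (E.obj a) =
        eqToHom (Functor.congr_obj hH₁ a) ≫ α.app a ≫ eqToHom (Functor.congr_obj hH₂ a).symm) ∧
      (∀ c : C, N.map (γ.app c) ≫ θ₂.hom.app c = θ₁.hom.app c ≫ β.app c) := by

  refine ⟨⟨fun c => N.preimage (θ₁.hom.app c ≫ β.app c ≫ θ₂.inv.app c), ?_⟩, ⟨?_, ?_⟩, ?_⟩
  · intro c c' f
    apply N.map_injective
    simp only [Functor.map_comp, Functor.map_preimage]
    have h1 := θ₁.hom.naturality f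
    have h2 := θ₂.inv.naturality f
    have h3 := β.naturality f
    simp only [Functor.comp_map] at h1 h2 h3
    slice_lhs 1 2 => rw [h1]
    slice_lhs 2 3 => rw [h3]
    slice_lhs 3 4 => rw [h2]
    simp
  · intro a
    apply N.map_injective
    rw [Functor.map_preimage, ← cancel_mono (θ₂.hom.app (E.obj a))]
    simp only [Category.assoc, Iso.inv_hom_id_app, Category.comp_id]
    rw [hθ₁ a, hθ₂ a]
    simp only [Functor.map_comp, eqToHom_map, Category.assoc, eqToHom_trans,
      eqToHom_refl, Category.id_comp]
    rw [← hcompat a]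
    simp
  · intro c
    simp [Functor.map_preimage]
  · rintro γ ⟨-, h2⟩
    ext c
    apply N.map_injective
    rw [Functor.map_preimage, ← cancel_mono (θ₂.hom.app c), Category.assoc, Category.assoc,
      Iso.inv_hom_id_app, Category.comp_id, h2]
end

section
/- Let I be a category, let C be a category with all limits of shape I, and let L : A ⥤ 𝓛 be a bijective-on-objects functor between categories. Then the precomposition functor L* : [𝓛, C] → [A, C], F ↦ L ⋙ F, creates limits of shape I. Dually, if C has all colimits of shape I, then L* creates colimits of shape I. -/
open CategoryTheory CategoryTheory.Limits

universe w₁ w₂ v₁ u₁ v₂ u₂ v₃ u₃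

/-! (Co)limits in functor categories are computed pointwise, so precomposition with `L` preserves
them. It is also conservative: every object of `𝓛` is isomorphic to some `L.obj a`, and a natural
transformation invertible at all of these is invertible everywhere by naturality. A conservative
functor preserving the (co)limits that exist in its domain creates them. -/

lemma whiskeringLeft_reflectsIsomorphisms_of_essSurj
    {A : Type u₁} [Category.{v₁} A] {𝓛 : Type u₂} [Category.{v₂} 𝓛]
    {C : Type u₃} [Category.{v₃} C] (L : A ⥤ 𝓛) [L.EssSurj] :
    ((Functor.whiskeringLeft A 𝓛 C).obj L).ReflectsIsomorphisms where
  reflects {F G} α _ := by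
    have hα_app : ∀ ℓ : 𝓛, IsIso (α.app ℓ) := by
      intro ℓ
      let e := L.objObjPreimageIso ℓ
      have : IsIso (α.app (L.obj (L.objPreimage ℓ))) :=
        inferInstanceAs (IsIso ((((Functor.whiskeringLeft A 𝓛 C).obj L).map α).app _))
      have hconj : α.app ℓ = F.map e.inv ≫ α.app _ ≫ G.map e.hom := by simp
      rw [hconj]
      infer_instance
    exact NatIso.isIso_of_isIso_app α

/-- Statement 3: if `L : A ⥤ 𝓛` is bijective on objects and `C` has (co)limits of shape `I`,
then precomposition with `L`, i.e. `L* : [𝓛, C] ⥤ [A, C]`, creates (co)limits of shape `I`. -/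
theorem whiskeringLeft_creates_limits_of_bijective_on_objects
    {A : Type u₁} [Category.{v₁} A] {𝓛 : Type u₂} [Category.{v₂} 𝓛]
    {C : Type u₃} [Category.{v₃} C] {I : Type w₁} [Category.{w₂} I]
    (L : A ⥤ 𝓛) (hL : Function.Bijective L.obj) :
    (HasLimitsOfShape I C →
      Nonempty (CreatesLimitsOfShape I ((Functor.whiskeringLeft A 𝓛 C).obj L))) ∧
    (HasColimitsOfShape I C →
      Nonempty (CreatesColimitsOfShape I ((Functor.whiskeringLeft A 𝓛 C).obj L))) := by
  have : L.EssSurj := Functor.essSurj_of_surj hL.surjective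
  have := whiskeringLeft_reflectsIsomorphisms_of_essSurj (C := C) L
  exact ⟨fun _ => ⟨⟨createsLimitOfReflectsIsomorphismsOfPreserves⟩⟩,
    fun _ => ⟨⟨createsColimitOfReflectsIsomorphismsOfPreserves⟩⟩⟩
end

section
/- Let L : A ⥤ 𝓛 be a bijective-on-objects functor between categories and let C be a category with coequalizers. Then the precomposition functor L* : [𝓛, C] → [A, C], F ↦ L ⋙ F, is monadic if and only if it has a left adjoint. -/
open CategoryTheory CategoryTheory.Limits

universe v₁ u₁ v₂ u₂ v₃ u₃

/-!
Beck's monadicity theorem applies to `L*`: it reflects isomorphisms because `L` is essentially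
surjective, and it preserves all colimits (they are computed pointwise), in particular the
reflexive coequalizers that `[𝓛, C]` has. The library's Beck theorem needs both categories to have the same
morphism universe, whereas the morphisms of `[𝓛, C]` and `[A, C]` live in `max u₂ v₃` and
`max u₁ v₃`. So it is applied with `𝓛` replaced by the equivalent category induced on the objects
of `A`, and monadicity is then transported along the resulting equivalence of functor categories.
-/

noncomputable section

namespace CategoryTheory

section

variable {C : Type u₁} [Category.{v₁} C] {D : Type u₂} [Category.{v₂} D]
  {D' : Type u₃} [Category.{v₃} D']

namespace Adjunction

variable {F : C ⥤ D'} {R : D' ⥤ C} (adj : F ⊣ R) (e : D ≌ D')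

def toMonadCompEquivalenceIso : (adj.comp e.symm.toAdjunction).toMonad ≅ adj.toMonad :=
  MonadIso.mk (F.isoWhiskerLeft (Functor.isoWhiskerRight e.counitIso R))
    (fun X => by
      show (adj.comp e.symm.toAdjunction).unit.app X ≫ R.map (e.counit.app (F.obj X)) =
        adj.unit.app X
      simp [comp_unit_app, ← R.map_comp])
    (fun X => by
      show R.map (e.functor.map
            ((adj.comp e.symm.toAdjunction).counit.app (e.inverse.obj (F.obj X)))) ≫
            R.map (e.counit.app (F.obj X)) =
          (R.map (e.functor.map (e.inverse.map (F.map (R.map (e.counit.app (F.obj X)))))) ≫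
            R.map (e.counit.app (F.obj (R.obj (F.obj X))))) ≫ R.map (adj.counit.app (F.obj X))
      simp only [comp_counit_app, ← R.map_comp, Category.assoc]
      congr 1
      simp)

def comparisonCompEquivalenceIso :
    Monad.comparison (adj.comp e.symm.toAdjunction) ⋙
      (Monad.algebraEquivOfIsoMonads (adj.toMonadCompEquivalenceIso e)).functor ≅
    e.functor ⋙ Monad.comparison adj :=
  NatIso.ofComponents (fun Y => Monad.Algebra.isoMk (Iso.refl _) (by
    show R.map (F.map (𝟙 _)) ≫ R.map (adj.counit.app (e.functor.obj Y)) =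
      (R.map (e.counitInv.app (F.obj (R.obj (e.functor.obj Y)))) ≫
        R.map (e.functor.map ((adj.comp e.symm.toAdjunction).counit.app Y))) ≫ 𝟙 _
    rw [comp_counit_app, ← R.map_comp, ← R.map_comp]
    simp))
    (fun _ => by ext; exact (Category.comp_id _).trans (Category.id_comp _).symm)

end Adjunction

abbrev monadicOfIsEquivalenceComp (E : D ⥤ D') [E.IsEquivalence] (R : D' ⥤ C)
    [MonadicRightAdjoint R] : MonadicRightAdjoint (E ⋙ R) where
  L := monadicLeftAdjoint R ⋙ E.inv
  adj := (monadicAdjunction R).comp E.asEquivalence.symm.toAdjunction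
  eqv :=
    have := (Functor.isEquivalence_iff_of_iso
      ((monadicAdjunction R).comparisonCompEquivalenceIso E.asEquivalence)).2 inferInstance
    @Functor.isEquivalence_of_comp_right _ _ _ _ _ _ _ _ (Monad.algebraEquivOfIsoMonads
      ((monadicAdjunction R).toMonadCompEquivalenceIso E.asEquivalence)).isEquivalence_functor this

end

variable {A : Type u₁} [Category.{v₁} A] {𝓛 : Type u₂} [Category.{v₂} 𝓛]
  (C : Type u₃) [Category.{v₃} C] (L : A ⥤ 𝓛)

instance reflectsIsomorphisms_whiskeringLeft_obj [L.EssSurj] :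
    ((Functor.whiskeringLeft A 𝓛 C).obj L).ReflectsIsomorphisms where
  reflects {F G} α hα := by
    rw [NatTrans.isIso_iff_isIso_app] at hα ⊢
    intro ℓ
    rw [← NatTrans.isIso_app_iff_of_iso α (L.objObjPreimageIso ℓ)]
    exact hα _

def Functor.toInducedCategory : A ⥤ InducedCategory 𝓛 L.obj where
  obj a := a
  map f := InducedCategory.homMk (L.map f)

instance : L.toInducedCategory.EssSurj :=
  Functor.essSurj_of_surj Function.surjective_id

instance [L.EssSurj] : (inducedFunctor L.obj).EssSurj where
  mem_essImage ℓ := ⟨L.objPreimage ℓ, ⟨L.objObjPreimageIso ℓ⟩⟩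

instance [L.EssSurj] : (inducedFunctor L.obj).IsEquivalence := { }

abbrev monadicWhiskeringLeftOfEssSurj [L.EssSurj] [HasCoequalizers C]
    [((Functor.whiskeringLeft A 𝓛 C).obj L).IsRightAdjoint] :
    MonadicRightAdjoint ((Functor.whiskeringLeft A 𝓛 C).obj L) :=
  let ι := (Functor.whiskeringLeft _ _ C).obj (inducedFunctor L.obj)
  let L' := (Functor.whiskeringLeft A _ C).obj L.toInducedCategory
  have : L'.IsRightAdjoint := (Functor.isRightAdjoint_comp_iff_right ι L').1 ‹_›
  have : Monad.PreservesColimitOfIsReflexivePair L' := ⟨fun _ _ _ _ _ => inferInstance⟩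
  have := Monad.monadicOfHasPreservesReflexiveCoequalizersOfReflectsIsomorphisms
    (Adjunction.ofIsRightAdjoint L')
  monadicOfIsEquivalenceComp ι L'

end CategoryTheory

end

/-- Statement 4: if `L : A ⥤ 𝓛` is bijective on objects and `C` has coequalizers, then the
precomposition functor `L* : [𝓛, C] ⥤ [A, C]` is monadic iff it has a left adjoint. -/
theorem whiskeringLeft_monadic_iff_isRightAdjoint
    {A : Type u₁} [Category.{v₁} A] {𝓛 : Type u₂} [Category.{v₂} 𝓛]
    {C : Type u₃} [Category.{v₃} C] [HasCoequalizers C]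
    (L : A ⥤ 𝓛) (hL : Function.Bijective L.obj) :
    Nonempty (MonadicRightAdjoint ((Functor.whiskeringLeft A 𝓛 C).obj L)) ↔
      ((Functor.whiskeringLeft A 𝓛 C).obj L).IsRightAdjoint := by
  refine ⟨fun ⟨_⟩ => inferInstance, fun _ => ?_⟩
  have : L.EssSurj := Functor.essSurj_of_surj hL.2
  exact ⟨monadicWhiskeringLeftOfEssSurj C L⟩
end

section
/- Let M be a monoid and let U be the functor from the category of finite M-sets (finite sets equipped with an M-action, with M-equivariant maps) to sets, sending a finite M-set to its underlying set. For a finite set S, let U^S denote the pointwise S-th power of U, i.e. the functor sending a finite M-set X to the set of functions S → U X. Then every natural transformation γ : U^S ⟶ U factors uniquely as a projection followed by an endotransformation of U: there exist a unique element s ∈ S and a unique natural transformation δ : U ⟶ U such that γ_X(f) = δ_X(f(s)) for every finite M-set X and every function f : S → U X. -/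
/-! The endotransformation is `γ` restricted to constant families, and the index is `γ` applied
to the family `id` on `S` with the trivial action. Naturality along the evaluation map
`S × X^S → X`, `(s, g) ↦ g s`, then gives the factorization. Uniqueness holds because every
endotransformation of `U` is the identity on trivial `M`-sets. -/

open CategoryTheory

universe u

namespace Stmt10

variable (M : Type u) [Monoid M]

/-- A finite `M`-set: a finite set equipped with an action of the monoid `M`. -/
structure FinMSet where
  carrier : Type u
  [finite : Finite carrier]
  [mulAction : MulAction M carrier]

attribute [instance] FinMSet.finite FinMSet.mulAction

variable {M} in
/-- An `M`-equivariant map of finite `M`-sets. -/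
structure FinMSetHom (A B : FinMSet M) where
  toFun : A.carrier → B.carrier
  equivariant : ∀ (m : M) (x : A.carrier), toFun (m • x) = m • toFun x

/-- The category of finite `M`-sets and `M`-equivariant maps. -/
instance : Category (FinMSet M) where
  Hom := FinMSetHom
  id A := ⟨id, fun _ _ => rfl⟩
  comp f g := ⟨g.toFun ∘ f.toFun, fun m x => by
    simp only [Function.comp_apply, f.equivariant, g.equivariant]⟩
  id_comp _ := rfl
  comp_id _ := rfl
  assoc _ _ _ := rfl

/-- The forgetful functor from finite `M`-sets to sets, sending a finite `M`-set to its
underlying set. -/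
def U : FinMSet M ⥤ Type u where
  obj A := A.carrier
  map f := TypeCat.ofHom f.toFun
  map_id _ := rfl
  map_comp _ _ := rfl

/-- The pointwise `S`-th power `U^S` of the forgetful functor `U`. -/
def Upow (S : Type u) : FinMSet M ⥤ Type u where
  obj A := S → A.carrier
  map f := TypeCat.ofHom (fun g => f.toFun ∘ g)
  map_id _ := rfl
  map_comp _ _ := rfl

variable {M}

namespace FinMSet

def trivial (T : Type u) [Finite T] : FinMSet M where
  carrier := T
  mulAction :=
    { smul := fun _ t => t
      one_smul := fun _ => rfl
      mul_smul := fun _ _ _ => rfl }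

def pi (S : Type u) [Finite S] (X : FinMSet M) : FinMSet M where
  carrier := S → X.carrier

def prod (X Y : FinMSet M) : FinMSet M where
  carrier := X.carrier × Y.carrier

def fst (X Y : FinMSet M) : prod X Y ⟶ X :=
  ⟨Prod.fst, fun _ _ => rfl⟩

def snd (X Y : FinMSet M) : prod X Y ⟶ Y :=
  ⟨Prod.snd, fun _ _ => rfl⟩

def evalAt {S : Type u} [Finite S] (X : FinMSet M) (s : S) : pi S X ⟶ X :=
  ⟨fun f => f s, fun _ _ => rfl⟩

/-- Equivariant because `M` acts trivially on the index. -/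
def eval (S : Type u) [Finite S] (X : FinMSet M) : prod (trivial S) (pi S X) ⟶ X :=
  ⟨fun p => p.2 p.1, fun _ _ => rfl⟩

def const {T : Type u} [Finite T] (t : T) : (trivial PUnit.{u + 1} : FinMSet M) ⟶ trivial T :=
  ⟨fun _ => t, fun _ _ => rfl⟩

end FinMSet

open FinMSet

section Naturality

variable {S : Type u} {X Y : FinMSet M}

theorem upow_naturality_apply (γ : Upow M S ⟶ U M) (g : X ⟶ Y) (f : S → X.carrier) :
    γ.app Y (g.toFun ∘ f) = g.toFun (γ.app X f) :=
  types_congr_hom (γ.naturality g) f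

theorem u_naturality_apply (δ : U M ⟶ U M) (g : X ⟶ Y) (x : X.carrier) :
    δ.app Y (g.toFun x) = g.toFun (δ.app X x) :=
  types_congr_hom (δ.naturality g) x

end Naturality

/-- Every point of a trivial `M`-set is the image of the one-point `M`-set, on which `δ` is
necessarily the identity. -/
theorem endo_app_trivial (δ : U M ⟶ U M) {T : Type u} [Finite T] (t : T) :
    δ.app (trivial T) t = t :=
  u_naturality_apply δ (const t) PUnit.unit

section Factorization

variable {S : Type u} [Finite S] (γ : Upow M S ⟶ U M)

def diag : U M ⟶ U M where
  app X := TypeCat.ofHom fun x => γ.app X fun _ => x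
  naturality _ _ g := by
    ext x
    exact upow_naturality_apply γ g fun _ => x

def index : S :=
  γ.app (trivial S) id

/-- Apply naturality to the family `s ↦ (s, f)` in `S × X^S`: its image under `eval` is `f`,
and its images under the two projections are `id` and the constant family `f`. -/
theorem app_eq_diag_app_index (X : FinMSet M) (f : S → X.carrier) :
    γ.app X f = (diag γ).app X (f (index γ)) := by
  let F : S → (prod (trivial S) (pi S X)).carrier := fun s => (s, f)
  have h_eval : γ.app X f = (γ.app (prod (trivial S) (pi S X)) F).2 (γ.app _ F).1 :=
    upow_naturality_apply γ (eval S X) F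
  have h_fst : (γ.app _ F).1 = index γ := (upow_naturality_apply γ (fst _ _) F).symm
  have h_snd : (γ.app _ F).2 = γ.app (pi S X) fun _ => f :=
    (upow_naturality_apply γ (snd _ _) F).symm
  have h_evalAt :
      (γ.app (pi S X) (fun _ => f) : S → X.carrier) (index γ) = (diag γ).app X (f (index γ)) :=
    (upow_naturality_apply γ (evalAt X (index γ)) _).symm
  rw [h_eval, h_fst, h_snd, h_evalAt]

theorem eq_index_diag_of_app_eq {s : S} {δ : U M ⟶ U M}
    (h : ∀ (X : FinMSet M) (f : S → X.carrier), γ.app X f = δ.app X (f s)) :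
    s = index γ ∧ δ = diag γ := by
  refine ⟨((h (trivial S) id).trans (endo_app_trivial δ s)).symm, ?_⟩
  ext X x
  exact (h X fun _ => x).symm

end Factorization

/-- every natural transformation `γ : U^S ⟶ U` factors uniquely as a
projection followed by an endotransformation of `U`: there are a unique `s ∈ S` and a
unique `δ : U ⟶ U` with `γ_X (f) = δ_X (f s)` for all finite `M`-sets `X` and `f : S → X`. -/
theorem power_to_forget_factors_uniquely (S : Type u) [Finite S]
    (γ : Upow M S ⟶ U M) :
    ∃! p : S × (U M ⟶ U M), ∀ (X : FinMSet M) (f : S → X.carrier),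
      γ.app X f = p.2.app X (f p.1) := by
  refine ⟨(index γ, diag γ), app_eq_diag_app_index γ, fun ⟨s, δ⟩ h => ?_⟩
  obtain ⟨rfl, rfl⟩ := eq_index_diag_of_app_eq γ h
  rfl

end Stmt10
end

section
/- The category of small sets has enough subobjects: every presheaf P : Setᵒᵖ → Set that preserves small products and admits a monomorphism into a representable presheaf Set(−, X) is itself representable. -/
open CategoryTheory CategoryTheory.Limits

universe u

/-!
Every set `A` is the coproduct of `A` copies of the point, so a presheaf `P` on sets that
turns coproducts into products satisfies `P(A) ≅ P(1)^A = Set(A, P(1))`, naturally in `A`,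
via `x ↦ (a ↦ P(a)(x))` where `a : 1 → A` picks out `a`. Hence `P` is represented by `P(1)`.
-/

namespace CategoryTheory.Limits.Types

universe v w

lemma Fan.bijective_of_isLimit {J : Type v} {F : J → Type (max v w)} {c : Fan F}
    (hc : IsLimit c) : Function.Bijective fun (x : c.pt) j => c.proj j x := by
  let e := hc.conePointUniqueUpToIso (productLimitCone.{v, w} F).isLimit
  have he : ⇑e.hom = fun x j => c.proj j x := by
    funext x j
    exact ConcreteCategory.congr_hom
      (hc.conePointUniqueUpToIso_hom_comp (productLimitCone.{v, w} F).isLimit ⟨j⟩) x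
  rw [← he]
  exact e.toEquiv.bijective

def cofanPUnit (A : Type w) : Cofan fun _ : A => (PUnit : Type w) :=
  Cofan.mk A fun a => ↾fun _ => a

def isColimitCofanPUnit (A : Type w) : IsColimit (cofanPUnit A) :=
  Cofan.IsColimit.mk _ (fun s => ↾fun a => s.inj a PUnit.unit)
    (fun s a => by ext ⟨⟩; rfl)
    (fun s m hm => by ext a; exact ConcreteCategory.congr_hom (hm a) PUnit.unit)

end CategoryTheory.Limits.Types

namespace CategoryTheory.Functor

open Opposite Limits.Types

variable (P : (Type u)ᵒᵖ ⥤ Type u)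

def toYonedaObjPUnit : P ⟶ yoneda.obj (P.obj (op PUnit)) where
  app A := ↾fun x => ↾fun a => P.map ((cofanPUnit A.unop).inj a).op x
  naturality A B h := by
    ext x
    dsimp only [yoneda_obj_obj]
    ext b
    exact (P.map_comp_apply h _ x).symm

lemma bijective_toYonedaObjPUnit_app (A : Type u) [PreservesLimitsOfShape (Discrete A) P] :
    Function.Bijective (P.toYonedaObjPUnit.app (op A)) := by
  have hc := isLimitMapConeFanMkEquiv P _ _
    (isLimitOfPreserves P (Cofan.IsColimit.op (isColimitCofanPUnit A)))
  exact TypeCat.homEquiv.symm.bijective.comp (Fan.bijective_of_isLimit hc)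

end CategoryTheory.Functor

theorem type_hasEnoughSubobjects_general (P : (Type u)ᵒᵖ ⥤ Type u)
    (hP : ∀ ι : Type u, PreservesLimitsOfShape (Discrete ι) P) :
    P.IsRepresentable := by
  have (A : (Type u)ᵒᵖ) : IsIso (P.toYonedaObjPUnit.app A) :=
    have := hP A.unop
    (isIso_iff_bijective _).2 (P.bijective_toYonedaObjPUnit_app A.unop)
  have : IsIso P.toYonedaObjPUnit := NatIso.isIso_of_isIso_app _
  exact .mk' (asIso P.toYonedaObjPUnit).symm

/-- The category of small sets has enough subobjects: every presheaf
`P : Setᵒᵖ ⥤ Set` that preserves small products (i.e. all small products, which exist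
in `Setᵒᵖ`) and admits a monomorphism (a componentwise injective natural transformation)
into a representable presheaf `Set(-, X)` is itself representable. -/
theorem type_hasEnoughSubobjects (P : (Type u)ᵒᵖ ⥤ Type u)
    (hP : ∀ ι : Type u, PreservesLimitsOfShape (Discrete ι) P)
    (X : Type u) (f : P ⟶ yoneda.obj X)
    (hf : ∀ A : (Type u)ᵒᵖ, Function.Injective (f.app A)) :
    P.IsRepresentable :=
  type_hasEnoughSubobjects_general P hP
end

section
/- The category of finite sets has enough subobjects: every presheaf P : FinSetᵒᵖ → Set that preserves all small products existing in FinSetᵒᵖ (equivalently, sends every small coproduct of finite sets that is again finite to the corresponding product of sets) and admits a monomorphism into a representable presheaf FinSet(−, X) is itself representable. -/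
/-!
A finite set `A` is the coproduct of `A` copies of the point `1`, so a product-preserving
presheaf satisfies `P(A) ≅ P(1)^A`. Given a monomorphism `f : P ⟶ FinSet(-, X)`, let `S ⊆ X`
consist of the points `x : 1 ⟶ X` in the image of `f` at `1`. Then a map `g : A ⟶ X` lies in
the image of `f` exactly when all its points lie in `S`, i.e. when `g` factors through `S`, and
hence `P ≅ FinSet(-, S)`.
-/

open CategoryTheory CategoryTheory.Limits Opposite

universe u v

namespace CategoryTheory.Functor

variable {C : Type u} [Category.{v} C] {P : Cᵒᵖ ⥤ Type v} {X S : C}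

theorem isRepresentable_of_range_app_eq (f : P ⟶ yoneda.obj X)
    (hf : ∀ A, Function.Injective (f.app A)) (ι : S ⟶ X) [Mono ι]
    (h : ∀ A : C, Set.range (f.app (op A)) = Set.range fun g : A ⟶ S => g ≫ ι) :
    P.IsRepresentable := by
  let e (A : C) : (A ⟶ S) ≃ P.obj (op A) :=
    (Equiv.ofInjective _ fun _ _ => (cancel_mono ι).1).trans
      ((Equiv.setCongr (h A).symm).trans (Equiv.ofInjective _ (hf (op A))).symm)
  have he {A : C} (g : A ⟶ S) : f.app (op A) (e A g) = g ≫ ι :=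
    Equiv.apply_ofInjective_symm (hf (op A)) _
  exact RepresentableBy.isRepresentable
    { homEquiv := e _
      homEquiv_comp := fun g g' => hf _ <| by simp [he] }

end CategoryTheory.Functor

namespace FintypeCat

abbrev punit : FintypeCat.{u} := of PUnit

def fromPUnit {A : FintypeCat.{u}} (a : A) : punit ⟶ A := homMk fun _ => a

@[simp]
theorem fromPUnit_comp {A B : FintypeCat.{u}} (a : A) (g : A ⟶ B) :
    fromPUnit a ≫ g = fromPUnit (g a) :=
  rfl

def cofanPUnit (A : FintypeCat.{u}) : Cofan fun _ : A => punit.{u} := Cofan.mk A fromPUnit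

def isColimitCofanPUnit (A : FintypeCat.{u}) : IsColimit (cofanPUnit A) :=
  Cofan.IsColimit.mk _ (fun s => homMk fun a => s.inj a PUnit.unit) (fun _ _ => rfl)
    (fun _ _ hm => hom_ext _ _ fun a => ConcreteCategory.congr_hom (hm a) PUnit.unit)

theorem exists_map_fromPUnit_op_eq {A : FintypeCat.{u}} (P : FintypeCat.{u}ᵒᵖ ⥤ Type u)
    [PreservesLimit (Discrete.functor fun _ : A => op punit.{u}) P] (y : A → P.obj (op punit)) :
    ∃ x : P.obj (op A), ∀ a, P.map (fromPUnit a).op x = y a := by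
  have hc := isLimitFanMkObjOfIsLimit P _ _ (Cofan.IsColimit.op (isColimitCofanPUnit A))
  exact ⟨Fan.IsLimit.lift hc (fun a => ↾fun _ : PUnit => y a) PUnit.unit,
    fun a => ConcreteCategory.congr_hom (Fan.IsLimit.fac hc _ a) PUnit.unit⟩

variable {X : FintypeCat.{u}}

theorem range_app_eq_setOf {P : FintypeCat.{u}ᵒᵖ ⥤ Type u} (f : P ⟶ yoneda.obj X)
    (A : FintypeCat.{u}) [PreservesLimit (Discrete.functor fun _ : A => op punit.{u}) P] :
    Set.range (f.app (op A)) =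
      {g : A ⟶ X | ∀ a, fromPUnit (g a) ∈ Set.range (f.app (op punit))} := by
  ext g
  constructor
  · rintro ⟨x, rfl⟩ a
    exact ⟨P.map (fromPUnit a).op x, by simp⟩
  · intro hg
    choose y hy using hg
    obtain ⟨x, hx⟩ := exists_map_fromPUnit_op_eq P y
    refine ⟨x, Cofan.IsColimit.hom_ext (isColimitCofanPUnit A) _ _ fun a => ?_⟩
    change fromPUnit a ≫ f.app (op A) x = fromPUnit a ≫ g
    simpa [← hx a] using hy a

theorem range_comp_homMk_subtypeVal (s : Set X) (A : FintypeCat.{u}) :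
    (Set.range fun g : A ⟶ of s => g ≫ homMk Subtype.val) = {g | ∀ a, g a ∈ s} := by
  ext g
  constructor
  · rintro ⟨g', rfl⟩ a
    exact (g' a).2
  · exact fun hg => ⟨homMk fun a => ⟨g a, hg a⟩, rfl⟩

instance (s : Set X) : Mono (homMk (X := of s) (Y := X) Subtype.val) :=
  ConcreteCategory.mono_of_injective _ Subtype.val_injective

end FintypeCat

/-- The category of finite sets has enough subobjects: every presheaf
`P : FinSetᵒᵖ ⥤ Set` that preserves all small products existing in `FinSetᵒᵖ` and admits
a monomorphism (a componentwise injective natural transformation) into a representable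
presheaf `FinSet(-, X)` is itself representable. -/
theorem fintypeCat_hasEnoughSubobjects (P : FintypeCat.{u}ᵒᵖ ⥤ Type u)
    (hP : ∀ ι : Type u, PreservesLimitsOfShape (Discrete ι) P)
    (X : FintypeCat.{u}) (f : P ⟶ yoneda.obj X)
    (hf : ∀ A : FintypeCat.{u}ᵒᵖ, Function.Injective (f.app A)) :
    P.IsRepresentable := by
  let S : Set X := FintypeCat.fromPUnit ⁻¹' Set.range (f.app (op FintypeCat.punit))
  refine Functor.isRepresentable_of_range_app_eq f hf
    (FintypeCat.homMk (X := FintypeCat.of S) Subtype.val) fun A => ?_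
  have := hP A
  exact (FintypeCat.range_app_eq_setOf f A).trans
    (FintypeCat.range_comp_homMk_subtypeVal S A).symm
end

section
/- For every field k, the category Vect_k of small k-vector spaces and k-linear maps has enough subobjects: every presheaf P : Vect_kᵒᵖ → Set that preserves small products and admits a monomorphism into a representable presheaf Vect_k(−, V) is itself representable. -/
/-!
Let `W ⊆ V` be the set of vectors `v` whose line `k ⟶ V, 1 ↦ v` lies in the image of `f`.
Every vector space is a coproduct of copies of `k`, and `P` turns such coproducts into
products, so a map `A ⟶ V` lies in the image of `f` as soon as its restrictions to the lines
spanned by a basis do, i.e. as soon as it sends a basis into `W`. Applied to the free space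
on `W`, this shows that `W` is a subspace; applied to an arbitrary `A`, it shows that the
image of `f` is the subfunctor of `yoneda V` of maps factoring through `W`. As `f` is
injective, `P ≅ yoneda W`.
-/

open CategoryTheory CategoryTheory.Limits Opposite

universe u

namespace CategoryTheory

variable {C : Type*} [Category C]

lemma Limits.Cofan.IsColimit.exists_map_inj_op_eq {ι : Type*} {X : ι → C} {c : Cofan X}
    (hc : IsColimit c) (P : Cᵒᵖ ⥤ Type*) [PreservesLimitsOfShape (Discrete ι) P]
    (x : ∀ i, P.obj (Opposite.op (X i))) : ∃ y, ∀ i, P.map (c.inj i).op y = x i := by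
  have hPc : IsLimit (P.mapCone c.op) := isLimitOfPreserves P (Cofan.IsColimit.op hc)
  let s : (Discrete.functor (fun i => Opposite.op (X i)) ⋙ P).sections :=
    ⟨fun j => x j.as, by
      rintro ⟨i⟩ ⟨i'⟩ φ
      obtain rfl : i = i' := Discrete.eq_of_hom φ
      simp⟩
  exact ⟨(Types.isLimitEquivSections hPc).symm s,
    fun i => Types.isLimitEquivSections_symm_apply hPc s ⟨i⟩⟩

lemma Limits.Cofan.IsColimit.mem_range_app {ι : Type*} {X : ι → C} {c : Cofan X}
    (hc : IsColimit c) {P : Cᵒᵖ ⥤ Type*} [PreservesLimitsOfShape (Discrete ι) P] {V : C}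
    (f : P ⟶ yoneda.obj V) {g : c.pt ⟶ V}
    (hg : ∀ i, c.inj i ≫ g ∈ Set.range (f.app (Opposite.op (X i)))) :
    g ∈ Set.range (f.app (Opposite.op c.pt)) := by
  choose x hx using hg
  obtain ⟨y, hy⟩ := Cofan.IsColimit.exists_map_inj_op_eq hc P x
  refine ⟨y, Cofan.IsColimit.hom_ext hc _ _ fun i => ?_⟩
  rw [← hx, ← hy]
  exact (NatTrans.naturality_apply f (c.inj i).op y).symm

lemma Functor.isRepresentable_of_range_eq {P : Cᵒᵖ ⥤ Type*} {V W : C}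
    (f : P ⟶ yoneda.obj V) [Mono f] (m : W ⟶ V) [Mono m]
    (h : Subfunctor.range (yoneda.map m) = Subfunctor.range f) : P.IsRepresentable :=
  isRepresentable_of_natIso (yoneda.obj W)
    (asIso (Subfunctor.toRange (yoneda.map m)) ≪≫
      eqToIso (congrArg Subfunctor.toFunctor h) ≪≫ (asIso (Subfunctor.toRange f)).symm)

end CategoryTheory

namespace ModuleCat

section CommRing

variable {k : Type u} [CommRing k]

noncomputable def toSpanSingleton {A : ModuleCat.{u} k} (a : A) : of k k ⟶ A :=
  ofHom (LinearMap.toSpanSingleton k A a)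

lemma toSpanSingleton_comp {A B : ModuleCat.{u} k} (a : A) (g : A ⟶ B) :
    toSpanSingleton a ≫ g = toSpanSingleton (g a) := by
  ext
  simp [toSpanSingleton]

lemma finsuppCocone_inj_comp {A : ModuleCat.{u} k} {ι : Type u} (g : of k (ι →₀ k) ⟶ A)
    (i : ι) : (finsuppCocone k k ι).inj i ≫ g = toSpanSingleton (g (Finsupp.single i 1)) := by
  ext
  simp [toSpanSingleton, finsuppCocone]

lemma exists_comp_subtype_eq_iff {A V : ModuleCat.{u} k} (W : Submodule k V) (g : A ⟶ V) :
    (∃ h : A ⟶ of k W, h ≫ ofHom W.subtype = g) ↔ ∀ a, g a ∈ W := by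
  constructor
  · rintro ⟨h, rfl⟩ a
    exact (h a).2
  · intro hg
    exact ⟨ofHom (LinearMap.codRestrict W g.hom hg), rfl⟩

variable {P : (ModuleCat.{u} k)ᵒᵖ ⥤ Type u} {V : ModuleCat.{u} k} (f : P ⟶ yoneda.obj V)

def rangeVectors : Set V :=
  {v | toSpanSingleton v ∈ Set.range (f.app (op (of k k)))}

variable {f}

lemma apply_mem_rangeVectors {A : ModuleCat.{u} k} {g : A ⟶ V}
    (hg : g ∈ Set.range (f.app (op A))) (a : A) : g a ∈ rangeVectors f := by
  change toSpanSingleton (g a) ∈ Set.range _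
  rw [← toSpanSingleton_comp]
  exact (Subfunctor.range f).map (toSpanSingleton a).op hg

lemma mem_range_of_forall_single_mem {ι : Type u} [PreservesLimitsOfShape (Discrete ι) P]
    (g : of k (ι →₀ k) ⟶ V) (hg : ∀ i, g (Finsupp.single i 1) ∈ rangeVectors f) :
    g ∈ Set.range (f.app (op (of k (ι →₀ k)))) :=
  Cofan.IsColimit.mem_range_app (finsuppCoconeIsColimit k k ι) f fun i => by
    rw [finsuppCocone_inj_comp]
    exact hg i

lemma span_rangeVectors_subset [PreservesLimitsOfShape (Discrete (rangeVectors f)) P] :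
    (Submodule.span k (rangeVectors f) : Set V) ⊆ rangeVectors f := by
  intro v hv
  obtain ⟨l, rfl⟩ := Finsupp.mem_span_iff_linearCombination k _ v |>.1 hv
  let g : of k (rangeVectors f →₀ k) ⟶ V := ofHom (Finsupp.linearCombination k Subtype.val)
  have hg : g ∈ Set.range (f.app (op (of k (rangeVectors f →₀ k)))) :=
    mem_range_of_forall_single_mem g fun i => by simp [g]
  exact apply_mem_rangeVectors hg l

end CommRing

lemma mem_range_app_iff {k : Type u} [Field k] {P : (ModuleCat.{u} k)ᵒᵖ ⥤ Type u}
    (hP : ∀ ι : Type u, PreservesLimitsOfShape (Discrete ι) P) {V : ModuleCat.{u} k}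
    {f : P ⟶ yoneda.obj V} {A : ModuleCat.{u} k} (g : A ⟶ V) :
    g ∈ Set.range (f.app (op A)) ↔ ∀ a, g a ∈ rangeVectors f := by
  refine ⟨apply_mem_rangeVectors, fun hg => ?_⟩
  let b := Module.Basis.ofVectorSpace k A
  let e : A ≅ of k (_ →₀ k) := b.repr.toModuleIso
  have : PreservesLimitsOfShape (Discrete (Module.Basis.ofVectorSpaceIndex k A)) P := hP _
  have he : e.inv ≫ g ∈ Set.range (f.app (op (of k (_ →₀ k)))) :=
    mem_range_of_forall_single_mem _ fun i => hg _
  simpa using (Subfunctor.range f).map e.hom.op he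

end ModuleCat

open ModuleCat

/-- For every field `k`, the category of small `k`-vector spaces has enough
subobjects: every presheaf `P : Vect_kᵒᵖ ⥤ Set` that preserves small products and admits
a monomorphism (a componentwise injective natural transformation) into a representable
presheaf `Vect_k(-, V)` is itself representable. -/
theorem moduleCat_hasEnoughSubobjects (k : Type u) [Field k]
    (P : (ModuleCat.{u} k)ᵒᵖ ⥤ Type u)
    (hP : ∀ ι : Type u, PreservesLimitsOfShape (Discrete ι) P)
    (V : ModuleCat.{u} k) (f : P ⟶ yoneda.obj V)
    (hf : ∀ A : (ModuleCat.{u} k)ᵒᵖ, Function.Injective (f.app A)) :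
    P.IsRepresentable := by
  have : Mono f := (NatTrans.mono_iff_mono_app f).2 fun A => (mono_iff_injective _).2 (hf A)
  have : PreservesLimitsOfShape (Discrete (rangeVectors f)) P := hP _
  have hW : (Submodule.span k (rangeVectors f) : Set V) = rangeVectors f :=
    span_rangeVectors_subset.antisymm Submodule.subset_span
  refine Functor.isRepresentable_of_range_eq f
    (ofHom (Submodule.span k (rangeVectors f)).subtype) ?_
  ext ⟨A⟩ g
  simp [exists_comp_subtype_eq_iff, mem_range_app_iff hP, ← SetLike.mem_coe, hW]
end

section
/- Let Q be a small poset in which every subset has a join (least upper bound). Then Q, regarded as a category (with a unique morphism p → q exactly when p ≤ q), has enough subobjects: every presheaf P : Qᵒᵖ → Set that preserves small products and admits a monomorphism into a representable presheaf Q(−, q) is itself representable. -/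
open CategoryTheory CategoryTheory.Limits

universe v u

/-!
A mono into `Q(-, q)` makes every value of `P` a subsingleton, so `P` is just the set `S` of
those `p` with `P(p)` inhabited, and `S` is downward closed. Joins in `Q` are products in `Qᵒᵖ`,
so product preservation turns the inhabited sets `P(s)`, `s ∈ S`, into an element of
`P(sSup S)`; hence `S` is the principal down-set of `sSup S`, which represents `P`.
-/

open Opposite

namespace CategoryTheory

theorem subsingleton_obj_of_injective_app {C : Type u} [Category.{v} C] [Quiver.IsThin C]
    {P : Cᵒᵖ ⥤ Type v} {X : C} (f : P ⟶ yoneda.obj X) {A : Cᵒᵖ}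
    (hf : Function.Injective (f.app A)) : Subsingleton (P.obj A) :=
  have : Subsingleton ((yoneda.obj X).obj A) := inferInstanceAs (Subsingleton (A.unop ⟶ X))
  hf.subsingleton

variable {Q : Type u} [Preorder Q]

noncomputable def isLimitFanOpOfIsLUB {S : Set Q} {r : Q} (h : IsLUB S r) :
    IsLimit (Fan.mk (op r) fun s : S => (homOfLE (h.1 s.2)).op) :=
  Cofan.IsColimit.op (Preorder.isColimitOfIsLUB _ (Cofan.mk r fun s : S => homOfLE (h.1 s.2))
    (by simpa using h))

theorem nonempty_obj_op_of_isLUB (P : Qᵒᵖ ⥤ Type*) {S : Set Q}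
    [PreservesLimitsOfShape (Discrete S) P] {r : Q} (h : IsLUB S r)
    (hS : ∀ s ∈ S, Nonempty (P.obj (op s))) : Nonempty (P.obj (op r)) := by
  have hc := Fan.isLimitMapConeEquiv P _ _ (isLimitOfPreserves P (isLimitFanOpOfIsLUB h))
  exact ⟨Fan.IsLimit.lift hc (fun s => TypeCat.ofHom fun (_ : PUnit) => (hS s s.2).some)
    PUnit.unit⟩

def Functor.representableByOfSubsingleton (P : Qᵒᵖ ⥤ Type u) [∀ A, Subsingleton (P.obj A)]
    {r : Q} (x : P.obj (op r)) (hle : ∀ p, P.obj (op p) → p ≤ r) : P.RepresentableBy r where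
  homEquiv {p} :=
    { toFun := fun g => P.map g.op x
      invFun := fun y => homOfLE (hle p y)
      left_inv := fun _ => Subsingleton.elim _ _
      right_inv := fun _ => Subsingleton.elim _ _ }
  homEquiv_comp _ _ := Subsingleton.elim _ _

end CategoryTheory

/-- A small poset `Q` in which every subset has a join, regarded as a category,
has enough subobjects: every presheaf `P : Qᵒᵖ ⥤ Set` that preserves small products and
admits a monomorphism (a componentwise injective natural transformation) into a
representable presheaf `Q(-, q)` is itself representable. -/
theorem completeJoinPoset_hasEnoughSubobjects (Q : Type u) [CompleteSemilatticeSup Q]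
    (P : Qᵒᵖ ⥤ Type u)
    (hP : ∀ ι : Type u, PreservesLimitsOfShape (Discrete ι) P)
    (q : Q) (f : P ⟶ yoneda.obj q)
    (hf : ∀ A : Qᵒᵖ, Function.Injective (f.app A)) :
    P.IsRepresentable := by
  have : ∀ A, Subsingleton (P.obj A) := fun A => subsingleton_obj_of_injective_app f (hf A)
  let S : Set Q := {p | Nonempty (P.obj (op p))}
  have := hP S
  obtain ⟨x⟩ := nonempty_obj_op_of_isLUB P (isLUB_sSup S) fun _ => id
  exact (Functor.representableByOfSubsingleton P x fun _ y => le_sSup ⟨y⟩).isRepresentable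
end

section
/- Let B be a category and let P, Q, R : Bᵒᵖ → Set be presheaves, with natural transformations σ : Q ⟶ P and τ : P ⟶ R such that every component of σ is surjective and every component of τ is injective. If Q and R preserve small products (i.e., preserve every small product that exists in Bᵒᵖ), then so does P. -/
open CategoryTheory CategoryTheory.Limits

universe t w v u

/-!
In `Type`, a cone is a limit iff the canonical map from its point to the sections of the diagram
is bijective, and these canonical maps commute with the maps induced by natural transformations.
The map for `P` is injective because following it with the map induced by `τ` on sections gives
the injective composite of `τ` and the map for `R`. It is surjective because preceding it by `σ`
gives the map for `Q` followed by the map induced by `σ` on sections, which is onto since over a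
discrete diagram every family of elements is a section.
-/

section

open Function Functor

variable {J C : Type*} [Category J] [Category C] {K : J ⥤ C} (c : Cone K) {F G : C ⥤ Type w}

lemma sectionOfCone_mapCone_comp_app (τ : F ⟶ G) :
    Types.sectionOfCone (G.mapCone c) ∘ τ.app c.pt =
      (sectionsFunctor J).map (whiskerLeft K τ) ∘ Types.sectionOfCone (F.mapCone c) := by
  ext x j
  exact (NatTrans.naturality_apply τ (c.π.app j) x).symm

lemma injective_sectionOfCone_mapCone_of_injective (τ : F ⟶ G)
    (hτ : ∀ X, Injective (τ.app X)) (hG : Injective (Types.sectionOfCone (G.mapCone c))) :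
    Injective (Types.sectionOfCone (F.mapCone c)) := by
  have h := hG.comp (hτ c.pt)
  rw [sectionOfCone_mapCone_comp_app] at h
  exact h.of_comp

lemma surjective_sectionsFunctor_map_of_discrete {ι : Type*} {F G : Discrete ι ⥤ Type w}
    (σ : F ⟶ G) (hσ : ∀ i, Surjective (σ.app i)) :
    Surjective ((sectionsFunctor (Discrete ι)).map σ) := by
  intro s
  choose t ht using fun i => hσ i (s.1 i)
  refine ⟨⟨t, ?_⟩, Subtype.ext (funext ht)⟩
  rintro ⟨i⟩ ⟨j⟩ ⟨⟨rfl : i = j⟩⟩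
  simp

lemma surjective_sectionOfCone_mapCone_of_surjective {ι : Type*} {K : Discrete ι ⥤ C}
    (c : Cone K) (σ : F ⟶ G) (hσ : ∀ X, Surjective (σ.app X))
    (hF : Surjective (Types.sectionOfCone (F.mapCone c))) :
    Surjective (Types.sectionOfCone (G.mapCone c)) := by
  have h := (surjective_sectionsFunctor_map_of_discrete (whiskerLeft K σ) fun i => hσ _).comp hF
  rw [← sectionOfCone_mapCone_comp_app] at h
  exact h.of_comp

end

/-- Statement 16: if `σ : Q ⟶ P` is a componentwise surjective natural transformation and
`τ : P ⟶ R` is a componentwise injective one, and the presheaves `Q` and `R` preserve all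
small products that exist in `Bᵒᵖ`, then so does `P`. -/
theorem presheaf_preservesProducts_of_surj_inj {B : Type u} [Category.{v} B]
    (P Q R : Bᵒᵖ ⥤ Type w)
    (σ : Q ⟶ P) (τ : P ⟶ R)
    (hσ : ∀ A : Bᵒᵖ, Function.Surjective (σ.app A))
    (hτ : ∀ A : Bᵒᵖ, Function.Injective (τ.app A))
    (hQ : ∀ ι : Type t, PreservesLimitsOfShape (Discrete ι) Q)
    (hR : ∀ ι : Type t, PreservesLimitsOfShape (Discrete ι) R) :
    ∀ ι : Type t, PreservesLimitsOfShape (Discrete ι) P := by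
  refine fun ι => ⟨fun {K} => ⟨fun {c} hc => ?_⟩⟩
  have hQc := (Types.isLimit_iff_bijective_sectionOfCone _).mp ⟨isLimitOfPreserves Q hc⟩
  have hRc := (Types.isLimit_iff_bijective_sectionOfCone _).mp ⟨isLimitOfPreserves R hc⟩
  exact ((Types.isLimit_iff_bijective_sectionOfCone _).mpr
    ⟨injective_sectionOfCone_mapCone_of_injective c τ hτ hRc.1,
      surjective_sectionOfCone_mapCone_of_surjective c σ hσ hQc.2⟩)
end

section
/- Let I : D ⥤ C be a fully faithful dense functor and let b be an object of C. Then the induced functor J : (I ↓ b) → C/b — from the comma category whose objects are pairs (d, f : I d → b) and whose morphisms (d, f) → (d′, f′) are morphisms g : d → d′ of D with f′ ∘ I g = f, to the slice category C/b, sending an object (d, f) to the object (I d, f) and a morphism g to I g — is dense. -/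
open CategoryTheory CategoryTheory.Limits

universe v₁ u₁ v₂ u₂

/-- The nerve functor of `F : D ⥤ C`, i.e. the restriction of the Yoneda embedding of `C`
along `F`, sending `c` to `C(F -, c)`. -/
def nerveFunctor' {D : Type u₁} [Category.{v₁} D] {C : Type u₂} [Category.{v₂} C]
    (F : D ⥤ C) : C ⥤ Dᵒᵖ ⥤ Type v₂ :=
  yoneda ⋙ (Functor.whiskeringLeft Dᵒᵖ Cᵒᵖ (Type v₂)).obj F.op

/-- A functor is *dense* if its nerve functor is fully faithful. -/
def IsDenseFunctor {D : Type u₁} [Category.{v₁} D] {C : Type u₂} [Category.{v₂} C]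
    (F : D ⥤ C) : Prop :=
  (nerveFunctor' F).Full ∧ (nerveFunctor' F).Faithful

/-!
Write `J` for `CostructuredArrow.toOver I b`. A natural transformation `α : N_J f ⟶ N_J g` is
determined by its values on the tautological elements `x : I d ⟶ f.left`, viewed as morphisms
`J (d, x ≫ f.hom) ⟶ f`, because every element `J X ⟶ f` is the image of a tautological one under
the nerve of `f`. The left components of these values form a natural family
`N_I f.left ⟶ N_I g.left`, so density of `I` yields `k : f.left ⟶ g.left` realising it; since
each value lies over `b`, faithfulness of `N_I` shows that `k` lies over `b`, and then `N_J k = α`.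
-/

section Nerve

variable {D : Type u₁} [Category.{v₁} D] {C : Type u₂} [Category.{v₂} C] {F : D ⥤ C}

lemma nerveFunctor'_hom_ext [(nerveFunctor' F).Faithful] {c c' : C} {k k' : c ⟶ c'}
    (h : ∀ (d : D) (x : F.obj d ⟶ c), x ≫ k = x ≫ k') : k = k' :=
  (nerveFunctor' F).map_injective (by ext d x; exact h d.unop x)

lemma exists_comp_eq_of_full_nerveFunctor' [(nerveFunctor' F).Full] {c c' : C}
    (A : ∀ {d : D}, (F.obj d ⟶ c) → (F.obj d ⟶ c'))
    (hA : ∀ {d d' : D} (w : d' ⟶ d) (x : F.obj d ⟶ c), A (F.map w ≫ x) = F.map w ≫ A x) :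
    ∃ k : c ⟶ c', ∀ (d : D) (x : F.obj d ⟶ c), x ≫ k = A x := by
  let β : (nerveFunctor' F).obj c ⟶ (nerveFunctor' F).obj c' :=
    { app := fun d => TypeCat.ofHom A
      naturality := fun _ _ w => by ext x; exact hA w.unop x }
  obtain ⟨k, hk⟩ := (nerveFunctor' F).map_surjective β
  exact ⟨k, fun d x => ConcreteCategory.congr_hom (NatTrans.congr_app hk (Opposite.op d)) x⟩

end Nerve

section CommaToSlice

variable {D : Type u₁} [Category.{v₁} D] {C : Type u₂} [Category.{v₂} C] {I : D ⥤ C} {b : C}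
  {f g : Over b} (α : (nerveFunctor' (CostructuredArrow.toOver I b)).obj f ⟶
    (nerveFunctor' (CostructuredArrow.toOver I b)).obj g)

lemma nerveHom_app_toOver_map_comp_left {X X' : CostructuredArrow I b} (m : X' ⟶ X)
    (p : (CostructuredArrow.toOver I b).obj X ⟶ f) :
    (α.app (Opposite.op X') ((CostructuredArrow.toOver I b).map m ≫ p)).left =
      I.map m.left ≫ (α.app (Opposite.op X) p).left :=
  congrArg CommaMorphism.left (NatTrans.naturality_apply α m.op p)

def nerveHomLeft {d : D} (x : I.obj d ⟶ f.left) : I.obj d ⟶ g.left :=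
  (α.app (Opposite.op (CostructuredArrow.mk (x ≫ f.hom))) (Over.homMk x rfl)).left

lemma nerveHomLeft_comp_hom {d : D} (x : I.obj d ⟶ f.left) :
    nerveHomLeft α x ≫ g.hom = x ≫ f.hom :=
  Over.w (α.app (Opposite.op (CostructuredArrow.mk (x ≫ f.hom))) (Over.homMk x rfl))

lemma nerveHomLeft_map_comp {d d' : D} (w : d' ⟶ d) (x : I.obj d ⟶ f.left) :
    nerveHomLeft α (I.map w ≫ x) = I.map w ≫ nerveHomLeft α x :=
  nerveHom_app_toOver_map_comp_left α (X := CostructuredArrow.mk (x ≫ f.hom))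
    (X' := CostructuredArrow.mk ((I.map w ≫ x) ≫ f.hom)) (CostructuredArrow.homMk w (by simp))
    (Over.homMk x rfl)

lemma nerveHom_app_left_eq_nerveHomLeft (X : CostructuredArrow I b)
    (x : I.obj X.left ⟶ f.left) (hx : x ≫ f.hom = X.hom) :
    (α.app (Opposite.op X) (Over.homMk x hx)).left = nerveHomLeft α x := by
  let m : CostructuredArrow.mk (x ≫ f.hom) ⟶ X :=
    CostructuredArrow.homMk (𝟙 X.left) (by simp [hx])
  have hm : (CostructuredArrow.toOver I b).map m ≫ Over.homMk x hx = Over.homMk x rfl :=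
    Over.OverMorphism.ext (show I.map (𝟙 X.left) ≫ x = x by simp)
  have h := nerveHom_app_toOver_map_comp_left α m (Over.homMk x hx)
  rw [hm, show I.map m.left = 𝟙 _ from I.map_id _] at h
  exact (Category.id_comp _).symm.trans h.symm

variable (I b)

lemma faithful_nerveFunctor'_toOver [(nerveFunctor' I).Faithful] :
    (nerveFunctor' (CostructuredArrow.toOver I b)).Faithful where
  map_injective {f _} {p q} hpq := Over.OverMorphism.ext <| nerveFunctor'_hom_ext fun d x => by
    have h := ConcreteCategory.congr_hom
      (NatTrans.congr_app hpq (Opposite.op (CostructuredArrow.mk (x ≫ f.hom))))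
      (Over.homMk x rfl : Over.mk (x ≫ f.hom) ⟶ f)
    exact congrArg CommaMorphism.left h

lemma full_nerveFunctor'_toOver [(nerveFunctor' I).Full] [(nerveFunctor' I).Faithful] :
    (nerveFunctor' (CostructuredArrow.toOver I b)).Full where
  map_surjective {f g} α := by
    obtain ⟨k, hk⟩ :=
      exists_comp_eq_of_full_nerveFunctor' (nerveHomLeft α) (nerveHomLeft_map_comp α)
    have hk_over : k ≫ g.hom = f.hom := nerveFunctor'_hom_ext fun d x => by
      rw [← Category.assoc, hk, nerveHomLeft_comp_hom]
    refine ⟨Over.homMk k hk_over, ?_⟩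
    ext X p
    exact Over.OverMorphism.ext
      ((hk _ p.left).trans (nerveHom_app_left_eq_nerveHomLeft α X.unop p.left (Over.w p)).symm)

end CommaToSlice

theorem denseFunctor_comma_to_slice_general
    {D : Type u₁} [Category.{v₁} D] {C : Type u₂} [Category.{v₂} C]
    (I : D ⥤ C) (hI : IsDenseFunctor I) (b : C) :
    IsDenseFunctor (CostructuredArrow.toOver I b) := by
  obtain ⟨_, _⟩ := hI
  exact ⟨full_nerveFunctor'_toOver I b, faithful_nerveFunctor'_toOver I b⟩

/-- Statement 17: if `I : D ⥤ C` is a fully faithful dense functor and `b : C`, then the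
induced functor `(I ↓ b) ⥤ C/b` from the comma category to the slice category is dense. -/
theorem denseFunctor_comma_to_slice
    {D : Type u₁} [Category.{v₁} D] {C : Type u₂} [Category.{v₂} C]
    (I : D ⥤ C) [I.Full] [I.Faithful] (hI : IsDenseFunctor I) (b : C) :
    IsDenseFunctor (CostructuredArrow.toOver I b) :=
  denseFunctor_comma_to_slice_general I hI b
end

section
/- Let I : D ⥤ C be a fully faithful dense functor and let G : E ⥤ C be a fully faithful functor admitting a left adjoint F : C ⥤ E. Then the full subcategory of E whose objects are those of the form F(I d) for objects d of D (equivalently, its closure under isomorphism, the essential image of the composite I ⋙ F) is dense in E; that is, the inclusion functor of this full subcategory into E is a dense functor. -/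
/-!
Write `K : D ⥤ (I ⋙ F).EssImageSubcategory` for the corestriction of `I ⋙ F`. The nerve of
`K ⋙ ι` is the nerve of `ι` followed by restriction along `K`, and restriction along an
essentially surjective functor is faithful; so `ι` is dense as soon as `K ⋙ ι ≅ I ⋙ F` is. By the
adjunction, `E(F (I d), X) ≃ C(I d, G X)`, so the nerve of `I ⋙ F` is `G` followed by the nerve
of `I`, a composite of fully faithful functors.
-/

open CategoryTheory CategoryTheory.Limits

universe v₁ u₁ v₂ u₂ v₃ u₃

instance CategoryTheory.Functor.whiskeringLeft_obj_faithful_of_essSurj {D A T : Type*}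
    [Category D] [Category A] [Category T] (K : D ⥤ A) [K.EssSurj] :
    ((Functor.whiskeringLeft D A T).obj K).Faithful where
  map_injective {P Q} α β h := by
    ext a
    rw [← cancel_epi (P.map (K.objObjPreimageIso a).hom), α.naturality, β.naturality]
    exact congrArg (· ≫ _) (NatTrans.congr_app h _)

section

variable {D : Type u₁} [Category.{v₁} D] {C : Type u₂} [Category.{v₂} C]

lemma nerveFunctor'_comp {A : Type*} [Category A] (K : D ⥤ A) (J : A ⥤ C) :
    nerveFunctor' (K ⋙ J) = nerveFunctor' J ⋙ (Functor.whiskeringLeft _ _ _).obj K.op :=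
  rfl

lemma IsDenseFunctor.of_iso {F F' : D ⥤ C} (e : F ≅ F') (h : IsDenseFunctor F) :
    IsDenseFunctor F' := by
  have e' : nerveFunctor' F ≅ nerveFunctor' F' :=
    Functor.isoWhiskerLeft yoneda ((Functor.whiskeringLeft _ _ _).mapIso (NatIso.op e.symm))
  obtain ⟨_, _⟩ := h
  exact ⟨Functor.Full.of_iso e', Functor.Faithful.of_iso e'⟩

lemma IsDenseFunctor.of_comp_of_essSurj {A : Type*} [Category A] (K : D ⥤ A) [K.EssSurj]
    (J : A ⥤ C) (h : IsDenseFunctor (K ⋙ J)) : IsDenseFunctor J := by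
  rw [IsDenseFunctor, nerveFunctor'_comp] at h
  obtain ⟨_, _⟩ := h
  let restrict := (Functor.whiskeringLeft _ _ (Type v₂)).obj K.op
  exact ⟨Functor.Full.of_comp_faithful _ restrict, Functor.Faithful.of_comp _ restrict⟩

variable {E : Type u₃} [Category.{v₃} E]

def CategoryTheory.Adjunction.nerveFunctor'CompUliftIso {F : C ⥤ E} {G : E ⥤ C} (adj : F ⊣ G)
    (I : D ⥤ C) :
    nerveFunctor' (I ⋙ F) ⋙ (Functor.whiskeringRight _ _ _).obj uliftFunctor.{v₂} ≅
      G ⋙ nerveFunctor' I ⋙ (Functor.whiskeringRight _ _ _).obj uliftFunctor.{v₃} :=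
  NatIso.ofComponents (fun X => NatIso.ofComponents (fun d =>
    (Equiv.ulift.trans ((adj.homEquiv _ _).trans Equiv.ulift.symm)).toIso)
    (fun _ => by ext ⟨u⟩; exact congrArg ULift.up (adj.homEquiv_naturality_left _ _)))
    (fun _ => by ext d ⟨u⟩; exact congrArg ULift.up (adj.homEquiv_naturality_right _ _))

lemma IsDenseFunctor.comp_of_adjunction {I : D ⥤ C} (hI : IsDenseFunctor I) {F : C ⥤ E}
    {G : E ⥤ C} [G.Full] [G.Faithful] (adj : F ⊣ G) : IsDenseFunctor (I ⋙ F) := by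
  obtain ⟨_, _⟩ := hI
  let e := adj.nerveFunctor'CompUliftIso I
  let lift := (Functor.whiskeringRight Dᵒᵖ _ _).obj uliftFunctor.{v₂, v₃}
  have : (nerveFunctor' (I ⋙ F) ⋙ lift).Full := Functor.Full.of_iso e.symm
  have : (nerveFunctor' (I ⋙ F) ⋙ lift).Faithful := Functor.Faithful.of_iso e.symm
  exact ⟨Functor.Full.of_comp_faithful _ lift, Functor.Faithful.of_comp _ lift⟩

end

theorem dense_essImage_of_reflective_general
    {D : Type u₁} [Category.{v₁} D] {C : Type u₂} [Category.{v₂} C]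
    {E : Type u₃} [Category.{v₃} E]
    (I : D ⥤ C) (hI : IsDenseFunctor I)
    (G : E ⥤ C) [G.Full] [G.Faithful] (F : C ⥤ E) (adj : F ⊣ G) :
    IsDenseFunctor (I ⋙ F).essImage.ι :=
  IsDenseFunctor.of_comp_of_essSurj (I ⋙ F).toEssImage _
    ((hI.comp_of_adjunction adj).of_iso (I ⋙ F).toEssImageCompι.symm)

/-- Statement 18: if `I : D ⥤ C` is fully faithful and dense and `G : E ⥤ C` is fully
faithful with a left adjoint `F`, then the essential image of `I ⋙ F` (the closure under
isomorphism of the full subcategory on the objects `F (I d)`) is dense in `E`, i.e. its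
inclusion functor is dense. -/
theorem dense_essImage_of_reflective
    {D : Type u₁} [Category.{v₁} D] {C : Type u₂} [Category.{v₂} C]
    {E : Type u₃} [Category.{v₃} E]
    (I : D ⥤ C) [I.Full] [I.Faithful] (hI : IsDenseFunctor I)
    (G : E ⥤ C) [G.Full] [G.Faithful] (F : C ⥤ E) (adj : F ⊣ G) :
    IsDenseFunctor (I ⋙ F).essImage.ι :=
  dense_essImage_of_reflective_general I hI G F adj
end

section
/- Let I : A ⥤ D be a fully faithful codense functor. Then I preserves all colimits that exist in A: for every diagram K : J ⥤ A (of any shape) admitting a colimit, I sends colimit cocones on K to colimit cocones on K ⋙ I. -/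
/-!
Evaluated at `a : A`, the conerve of `(I.mapCocone c).op` is the cone of sets
`D(I c.pt, I a) → D(I (K j), I a)`, which full faithfulness of `I` identifies with
`A(c.pt, a) → A(K j, a)`; this is a limit because `c` is a colimit. Limits of functors into
`Type` are computed pointwise, so the conerve sends `(I.mapCocone c).op` to a limit cone, and a
fully faithful functor reflects limits.
-/

open CategoryTheory CategoryTheory.Limits

universe w₁ w₂ v₁ u₁ v₂ u₂

/-- The conerve functor of `I : A ⥤ D`, sending `d` to `D(d, I -)`.  `I` is *codense* when
this functor (equivalently, the conerve `D ⥤ [A, Type]ᵒᵖ`) is fully faithful. -/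
def conerve {A : Type u₁} [Category.{v₁} A] {D : Type u₂} [Category.{v₂} D]
    (I : A ⥤ D) : Dᵒᵖ ⥤ A ⥤ Type v₂ :=
  coyoneda ⋙ (Functor.whiskeringLeft A D (Type v₂)).obj I

variable {A : Type u₁} [Category.{v₁} A] {D : Type u₂} [Category.{v₂} D]

/-- The two hom-sets live in `Type v₁` and `Type v₂`, so they are compared after lifting both
to `Type (max v₁ v₂)`; `uliftFunctor` reflects the resulting limit back to `Type v₂`. -/
noncomputable def isLimitConerveMapCoconeOp (I : A ⥤ D) [I.Full] [I.Faithful]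
    {J : Type w₁} [Category.{w₂} J] {K : J ⥤ A} {c : Cocone K} (hc : IsColimit c) :
    IsLimit ((conerve I).mapCone (I.mapCocone c).op) :=
  evaluationJointlyReflectsLimits _ fun a =>
    have hA : IsLimit ((uliftYoneda.{v₂}.obj a).mapCone c.op) := isLimitOfPreserves _ hc.op
    have hD : IsLimit ((I.op ⋙ uliftYoneda.{v₁}.obj (I.obj a)).mapCone c.op) :=
      IsLimit.mapConeEquiv ((Functor.FullyFaithful.ofFullyFaithful I).homNatIso a).symm hA
    isLimitOfReflects uliftFunctor.{v₁} hD

theorem codense_fullyFaithful_preserves_colimits_general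
    {A : Type u₁} [Category.{v₁} A] {D : Type u₂} [Category.{v₂} D]
    (I : A ⥤ D) [I.Full] [I.Faithful]
    (hFull : (conerve I).Full) (hFaithful : (conerve I).Faithful)
    {J : Type w₁} [Category.{w₂} J] (K : J ⥤ A)
    (c : Cocone K) (hc : IsColimit c) :
    Nonempty (IsColimit (I.mapCocone c)) :=
  ⟨isColimitOfOp (isLimitOfReflects (conerve I) (isLimitConerveMapCoconeOp I hc))⟩

/-- Statement 19: a fully faithful codense functor `I : A ⥤ D` preserves all colimits that
exist in `A`: for every diagram `K : J ⥤ A` admitting a colimit, `I` sends colimit cocones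
on `K` to colimit cocones on `K ⋙ I`. -/
theorem codense_fullyFaithful_preserves_colimits
    {A : Type u₁} [Category.{v₁} A] {D : Type u₂} [Category.{v₂} D]
    (I : A ⥤ D) [I.Full] [I.Faithful]
    (hFull : (conerve I).Full) (hFaithful : (conerve I).Faithful)
    {J : Type w₁} [Category.{w₂} J] (K : J ⥤ A) (hK : HasColimit K)
    (c : Cocone K) (hc : IsColimit c) :
    Nonempty (IsColimit (I.mapCocone c)) :=
  codense_fullyFaithful_preserves_colimits_general I hFull hFaithful K c hc
end
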